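/- arXiv:1908.11570 — 9 statements merged into one kernel-verified Lean document; each statement's English description precedes it below -/
import Mathlib

section
/- Let f : ℝⁿ → ℝ be given by f(x) = max_{t∈T} f_t(x), where each f_t : ℝⁿ → ℝ is an affine function and the maximum is finite and attained at every x. Let I(x) = {t ∈ T : f_t(x) = f(x)} and let Q = Argmin_{x∈ℝⁿ} f(x). If Q is nonempty, then for every x in the relative interior of Q and every y ∈ Q one has I(x) ⊆ I(y). -/
open Set

/-- Let `f : ℝⁿ → ℝ` be a pointwise maximum of a family of affine functions `F t`, the
maximum being finite and attained at every point. Let `I x = {t : F t x = f x}` and let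
`Q = Argmin f`. If `Q` is nonempty, then for every `x` in the relative interior of `Q` and
every `y ∈ Q` one has `I x ⊆ I y`. -/
theorem stmt2 (n : ℕ) (T : Type*) (F : T → ((Fin n → ℝ) →ᵃ[ℝ] ℝ))
    (f : (Fin n → ℝ) → ℝ)
    (hub : ∀ x t, F t x ≤ f x) (hatt : ∀ x, ∃ t, F t x = f x) :
    let I : (Fin n → ℝ) → Set T := fun x => {t | F t x = f x}
    let Q : Set (Fin n → ℝ) := {x | ∀ y, f x ≤ f y}
    Q.Nonempty → ∀ x ∈ intrinsicInterior ℝ Q, ∀ y ∈ Q, I x ⊆ I y := by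
  intro I Q _ x hx y hyQ t ht
  have hxQ : x ∈ Q := intrinsicInterior_subset hx
  -- f is constant on Q
  have hfy : f y = f x := le_antisymm (hyQ x) (hxQ y)
  -- unpack the intrinsic interior
  obtain ⟨x', hx', hxx⟩ := hx
  have hxS : x ∈ affineSpan ℝ Q := subset_affineSpan ℝ Q hxQ
  have hyS : y ∈ affineSpan ℝ Q := subset_affineSpan ℝ Q hyQ
  -- the line through y and x, parametrized, as a map into the affine span
  set g : ℝ → (affineSpan ℝ Q : Set (Fin n → ℝ)) :=
    fun θ => ⟨AffineMap.lineMap y x (1 + θ),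
      AffineMap.lineMap_mem (1 + θ) hyS hxS⟩ with hg
  have hgc : Continuous g := by
    apply Continuous.subtype_mk
    have : (fun θ : ℝ => (AffineMap.lineMap y x (1 + θ) : Fin n → ℝ))
        = fun θ : ℝ => (1 + θ) • (x - y) + y := by
      funext θ
      simp only [AffineMap.lineMap_apply, vsub_eq_sub, vadd_eq_add]
    rw [this]
    fun_prop
  have hg0 : g 0 = x' := by
    apply Subtype.ext
    have : (g 0 : Fin n → ℝ) = AffineMap.lineMap y x (1 : ℝ) := by norm_num [hg]
    rw [this, AffineMap.lineMap_apply_one, hxx]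
  have hmem : g 0 ∈ interior (Subtype.val ⁻¹' Q : Set (affineSpan ℝ Q)) := by
    rw [hg0]; exact hx'
  have hnhds : (fun θ => g θ) ⁻¹' interior (Subtype.val ⁻¹' Q) ∈ nhds (0 : ℝ) :=
    hgc.continuousAt.preimage_mem_nhds (isOpen_interior.mem_nhds hmem)
  obtain ⟨ε, hε, hball⟩ := Metric.mem_nhds_iff.mp hnhds
  set θ : ℝ := ε / 2 with hθdef
  have hθ : 0 < θ := by positivity
  have hθball : θ ∈ Metric.ball (0 : ℝ) ε := by
    rw [Metric.mem_ball, Real.dist_eq, sub_zero, abs_of_pos hθ]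
    rw [hθdef]; linarith
  have hzQ' := interior_subset (hball hθball)
  have hzQ : (AffineMap.lineMap y x (1 + θ) : Fin n → ℝ) ∈ Q := hzQ'
  set z : Fin n → ℝ := AffineMap.lineMap y x (1 + θ) with hz
  have hfz : f z = f x := le_antisymm (hzQ x) (hxQ z)
  -- F t at z, affinely
  have hFz : F t z = AffineMap.lineMap (F t y) (F t x) (1 + θ) := by
    rw [hz, AffineMap.apply_lineMap]
  have hFzval : F t z = F t y + (1 + θ) * (F t x - F t y) := by
    rw [hFz]; simp [AffineMap.lineMap_apply]; ring
  have h1 : F t z ≤ f x := hfz ▸ hub z t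
  have h2 : F t y ≤ f x := hfy ▸ hub y t
  have h3 : F t x = f x := ht
  show F t y = f y
  rw [hfy]
  nlinarith [hFzval, h1, h2, h3, hθ]
end

section
/- For any two polynomials p and q in the relative interior of the solution set Q, the sets of points of minimal and maximal deviation coincide: N(q) = N(p) and P(q) = P(p). -/
open Set

noncomputable section

/-- `g` is a polynomial function on `ℝⁿ`. -/
def IsPolyFun (n : ℕ) (g : (Fin n → ℝ) → ℝ) : Prop :=
  ∃ P : MvPolynomial (Fin n) ℝ, ∀ x, g x = MvPolynomial.eval x P

/-- The uniform deviation `‖f − q‖_∞ = max_{x ∈ X} |f x − q x|`. -/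
def dev {n : ℕ} (X : Set (Fin n → ℝ)) (f q : (Fin n → ℝ) → ℝ) : ℝ :=
  sSup ((fun x => |f x - q x|) '' X)

/-- The solution set `Q` of the Chebyshev approximation problem for `f` on `X` over `V`. -/
def solSet {n : ℕ} (V : Submodule ℝ ((Fin n → ℝ) → ℝ)) (X : Set (Fin n → ℝ))
    (f : (Fin n → ℝ) → ℝ) : Set ((Fin n → ℝ) → ℝ) :=
  {q | q ∈ V ∧ ∀ p ∈ V, dev X f q ≤ dev X f p}

/-- `N(q)`: points of minimal deviation. -/
def Nset {n : ℕ} (X : Set (Fin n → ℝ)) (f q : (Fin n → ℝ) → ℝ) : Set (Fin n → ℝ) :=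
  {x ∈ X | q x - f x = dev X f q}

/-- `P(q)`: points of maximal deviation. -/
def Pset {n : ℕ} (X : Set (Fin n → ℝ)) (f q : (Fin n → ℝ) → ℝ) : Set (Fin n → ℝ) :=
  {x ∈ X | f x - q x = dev X f q}

/-- Beyond-point lemma: if `q` is in the intrinsic interior of `s` and `p ∈ s`, then some
point on the line through `p` and `q` strictly beyond `q` still lies in `s`. -/
lemma aux_beyond {n : ℕ} {s : Set ((Fin n → ℝ) → ℝ)} {q p : (Fin n → ℝ) → ℝ}
    (hq : q ∈ intrinsicInterior ℝ s) (hp : p ∈ s) :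
    ∃ ε : ℝ, 0 < ε ∧ (1 + ε) • (q - p) + p ∈ s := by
  obtain ⟨y, hy, hyc⟩ := mem_intrinsicInterior.1 hq
  have hp' : p ∈ affineSpan ℝ s := subset_affineSpan ℝ s hp
  have hq' : q ∈ affineSpan ℝ s := subset_affineSpan ℝ s (intrinsicInterior_subset hq)
  set γ : ℝ → (affineSpan ℝ s : Set ((Fin n → ℝ) → ℝ)) :=
    fun t => ⟨t • (q - p) + p, by
      have := AffineMap.lineMap_mem (Q := affineSpan ℝ s) t hp' hq'
      rwa [AffineMap.lineMap_apply_module'] at this⟩ with hγ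
  have hγc : Continuous γ := by
    apply Continuous.subtype_mk
    exact (continuous_id.smul continuous_const).add continuous_const
  have h1 : γ 1 ∈ interior ((↑) ⁻¹' s : Set (affineSpan ℝ s)) := by
    have : γ 1 = y := by
      apply Subtype.ext
      simp [hγ, hyc]
    rwa [this]
  have hO : IsOpen (γ ⁻¹' interior ((↑) ⁻¹' s : Set (affineSpan ℝ s))) :=
    isOpen_interior.preimage hγc
  obtain ⟨ε, hε, hball⟩ := Metric.isOpen_iff.1 hO 1 h1
  refine ⟨ε / 2, by linarith, ?_⟩
  have hmem : (1 + ε / 2) ∈ Metric.ball (1 : ℝ) ε := by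
    simp [Real.dist_eq, abs_of_nonneg, hε.le]
    linarith
  have := interior_subset (hball hmem)
  exact this

/-- Every element of `X` witnesses a value at most the uniform deviation. -/
lemma aux_le_dev {n : ℕ} {X : Set (Fin n → ℝ)} (hXc : IsCompact X)
    {f g : (Fin n → ℝ) → ℝ} (hf : ContinuousOn f X) (hg : ContinuousOn g X)
    {x : Fin n → ℝ} (hx : x ∈ X) : |f x - g x| ≤ dev X f g := by
  apply le_csSup
  · exact (hXc.image_of_continuousOn ((hf.sub hg).abs)).bddAbove
  · exact mem_image_of_mem _ hx

lemma aux_cont {n : ℕ} {g : (Fin n → ℝ) → ℝ} (h : IsPolyFun n g) : Continuous g := by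
  obtain ⟨P, hP⟩ := h
  have : g = fun x => MvPolynomial.eval x P := funext hP
  rw [this]
  exact MvPolynomial.continuous_eval (p := P)

/-- For any two polynomials `p`, `q` in the relative interior of the solution set `Q`, the
sets of points of minimal and maximal deviation coincide: `N(q) = N(p)` and `P(q) = P(p)`. -/
theorem stmt3 (n : ℕ) (X : Set (Fin n → ℝ)) (hX : X.Nonempty) (hXc : IsCompact X)
    (f : (Fin n → ℝ) → ℝ) (hf : ContinuousOn f X)
    (V : Submodule ℝ ((Fin n → ℝ) → ℝ)) (hVpoly : ∀ g ∈ V, IsPolyFun n g)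
    (hVfd : FiniteDimensional ℝ ↥V) :
    ∀ q ∈ intrinsicInterior ℝ (solSet V X f), ∀ p ∈ intrinsicInterior ℝ (solSet V X f),
      Nset X f q = Nset X f p ∧ Pset X f q = Pset X f p := by
  -- deviation is constant on the solution set
  have hdev : ∀ q ∈ solSet V X f, ∀ p ∈ solSet V X f, dev X f q = dev X f p := by
    intro q hq p hp
    exact le_antisymm (hq.2 p hp.1) (hp.2 q hq.1)
  have hbound : ∀ g ∈ V, ∀ x ∈ X, |f x - g x| ≤ dev X f g := by
    intro g hg x hx
    exact aux_le_dev hXc hf (aux_cont (hVpoly g hg)).continuousOn hx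
  -- key inclusion
  have key : ∀ q ∈ intrinsicInterior ℝ (solSet V X f), ∀ p ∈ solSet V X f,
      Nset X f q ⊆ Nset X f p ∧ Pset X f q ⊆ Pset X f p := by
    intro q hq p hp
    have hqQ : q ∈ solSet V X f := intrinsicInterior_subset hq
    obtain ⟨ε, hε, hr⟩ := aux_beyond hq hp
    set r : (Fin n → ℝ) → ℝ := (1 + ε) • (q - p) + p with hrdef
    have hdq : dev X f p = dev X f q := hdev p hp q hqQ
    have hdr : dev X f r = dev X f q := hdev r hr q hqQ
    have hrx : ∀ x, r x = (1 + ε) * (q x - p x) + p x := fun x => rfl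
    constructor
    · rintro x ⟨hx, hNx⟩
      refine ⟨hx, ?_⟩
      have h1 : |f x - r x| ≤ dev X f q := by rw [← hdr]; exact hbound r hr.1 x hx
      have h2 : |f x - p x| ≤ dev X f q := by rw [← hdq]; exact hbound p hp.1 x hx
      have h1' := neg_le_of_abs_le h1
      have h2' := abs_le.1 h2
      rw [hrx x] at h1'
      rw [hdq]
      nlinarith [h2'.1, h2'.2]
    · rintro x ⟨hx, hPx⟩
      refine ⟨hx, ?_⟩
      have h1 : |f x - r x| ≤ dev X f q := by rw [← hdr]; exact hbound r hr.1 x hx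
      have h2 : |f x - p x| ≤ dev X f q := by rw [← hdq]; exact hbound p hp.1 x hx
      have h1' := le_of_abs_le h1
      have h2' := abs_le.1 h2
      rw [hrx x] at h1'
      rw [hdq]
      nlinarith [h2'.1, h2'.2]
  intro q hq p hp
  have hqQ : q ∈ solSet V X f := intrinsicInterior_subset hq
  have hpQ : p ∈ solSet V X f := intrinsicInterior_subset hp
  exact ⟨subset_antisymm (key q hq p hpQ).1 (key p hp q hqQ).1,
    subset_antisymm (key q hq p hpQ).2 (key p hp q hqQ).2⟩
end
end

section
/- For any two optimal solutions q, p ∈ Q, the difference p − q belongs to S(p), and S(p) ⊆ S, where S = S(q₀) for any q₀ in the relative interior of Q. -/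
/-!
If `q` and `p` are both optimal they have the same deviation `d`, so at a point where `f − p`
attains `+d` the function `f − q ≤ d` forces `p − q ≤ 0`, and symmetrically `p − q ≥ 0` on `N(p)`.
For the inclusion, a relative interior point `q₀` is an interior point of the segment from `p` to
some `r = q₀ + t (q₀ − p) ∈ Q`. At a point where `f − q₀` attains `±d`, the weighted average
`(1 + t)(f − q₀) = t (f − p) + (f − r)` of two quantities bounded by `d` equals `(1 + t) d`,
so `f − p` attains the same value: `P(q₀) ⊆ P(p)` and `N(q₀) ⊆ N(p)`, whence `S(p) ⊆ S(q₀)`.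
-/

open Set

noncomputable section

/-- `S(q)`: the set of polynomials in `V` separating `P(q)` and `N(q)`. -/
def sepSet {n : ℕ} (V : Submodule ℝ ((Fin n → ℝ) → ℝ)) (X : Set (Fin n → ℝ))
    (f q : (Fin n → ℝ) → ℝ) : Set ((Fin n → ℝ) → ℝ) :=
  {s | s ∈ V ∧ ∀ x ∈ Pset X f q, ∀ y ∈ Nset X f q, s x * s y ≤ 0}

lemma exists_pos_add_smul_sub_mem_of_mem_intrinsicInterior {E : Type*} [AddCommGroup E]
    [Module ℝ E] [TopologicalSpace E] [ContinuousAdd E] [ContinuousSMul ℝ E] {Q : Set E}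
    {q₀ p : E} (hq₀ : q₀ ∈ intrinsicInterior ℝ Q) (hp : p ∈ Q) :
    ∃ t : ℝ, 0 < t ∧ q₀ + t • (q₀ - p) ∈ Q := by
  obtain ⟨y, hy, rfl⟩ := hq₀
  let line : ℝ → affineSpan ℝ Q := fun t =>
    ⟨t • ((y : E) - p) + y,
      by simpa using (affineSpan ℝ Q).smul_vsub_vadd_mem t y.2 (subset_affineSpan ℝ Q hp) y.2⟩
  have hline : Continuous line := by fun_prop
  have hnhds : ∀ᶠ t in nhds 0, line t ∈ interior (((↑) : affineSpan ℝ Q → E) ⁻¹' Q) :=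
    hline.continuousAt.eventually_mem (by simpa [line] using isOpen_interior.mem_nhds hy)
  obtain ⟨t, ht, htQ⟩ := hnhds.exists_gt
  exact ⟨t, ht, by simpa [line, add_comm] using interior_subset htQ⟩

lemma eq_of_mul_add_eq_one_add_mul {a b d t : ℝ} (ht : 0 < t) (ha : a ≤ d) (hb : b ≤ d)
    (h : t * a + b = (1 + t) * d) : a = d := by nlinarith

lemma IsPolyFun.continuous {n : ℕ} {g : (Fin n → ℝ) → ℝ} (hg : IsPolyFun n g) :
    Continuous g := by
  obtain ⟨P, hP⟩ := hg
  simpa only [← funext hP] using MvPolynomial.continuous_eval P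

lemma abs_sub_le_dev {n : ℕ} {X : Set (Fin n → ℝ)} (hX : IsCompact X) {f q : (Fin n → ℝ) → ℝ}
    (hf : ContinuousOn f X) (hq : ContinuousOn q X) {x : Fin n → ℝ} (hx : x ∈ X) :
    |f x - q x| ≤ dev X f q :=
  le_csSup (hX.bddAbove_image (hf.sub hq).abs) (mem_image_of_mem _ hx)

lemma dev_eq_of_mem_solSet {n : ℕ} {V : Submodule ℝ ((Fin n → ℝ) → ℝ)} {X : Set (Fin n → ℝ)}
    {f q p : (Fin n → ℝ) → ℝ} (hq : q ∈ solSet V X f) (hp : p ∈ solSet V X f) :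
    dev X f q = dev X f p :=
  le_antisymm (hq.2 p hp.1) (hp.2 q hq.1)

section Chebyshev

variable {n : ℕ} {X : Set (Fin n → ℝ)} {f : (Fin n → ℝ) → ℝ} {V : Submodule ℝ ((Fin n → ℝ) → ℝ)}

lemma abs_sub_le_dev_of_mem_solSet (hX : IsCompact X) (hf : ContinuousOn f X)
    (hV : ∀ g ∈ V, IsPolyFun n g) {r p : (Fin n → ℝ) → ℝ} (hr : r ∈ solSet V X f)
    (hp : p ∈ solSet V X f) {x : Fin n → ℝ} (hx : x ∈ X) : |f x - r x| ≤ dev X f p :=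
  dev_eq_of_mem_solSet hr hp ▸ abs_sub_le_dev hX hf (hV r hr.1).continuous.continuousOn hx

lemma sub_mem_sepSet (hX : IsCompact X) (hf : ContinuousOn f X)
    (hV : ∀ g ∈ V, IsPolyFun n g) {q p : (Fin n → ℝ) → ℝ} (hq : q ∈ solSet V X f)
    (hp : p ∈ solSet V X f) : p - q ∈ sepSet V X f p := by
  refine ⟨V.sub_mem hp.1 hq.1, fun x hx y hy => mul_nonpos_of_nonpos_of_nonneg ?_ ?_⟩
  · rw [Pi.sub_apply]
    linarith [hx.2, (abs_le.mp (abs_sub_le_dev_of_mem_solSet hX hf hV hq hp hx.1)).2]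
  · rw [Pi.sub_apply]
    linarith [hy.2, (abs_le.mp (abs_sub_le_dev_of_mem_solSet hX hf hV hq hp hy.1)).1]

variable (hX : IsCompact X) (hf : ContinuousOn f X) (hV : ∀ g ∈ V, IsPolyFun n g)
  {q₀ p : (Fin n → ℝ) → ℝ} (hq₀ : q₀ ∈ intrinsicInterior ℝ (solSet V X f))
  (hp : p ∈ solSet V X f)
include hX hf hV hq₀ hp

lemma Pset_subset_of_mem_intrinsicInterior : Pset X f q₀ ⊆ Pset X f p := by
  obtain ⟨t, ht, hr⟩ := exists_pos_add_smul_sub_mem_of_mem_intrinsicInterior hq₀ hp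
  rintro x ⟨hx, hxq₀⟩
  refine ⟨hx, eq_of_mul_add_eq_one_add_mul ht ?_ ?_ (b := f x - (q₀ + t • (q₀ - p)) x) ?_⟩
  · exact (abs_le.mp (abs_sub_le_dev_of_mem_solSet hX hf hV hp hp hx)).2
  · exact (abs_le.mp (abs_sub_le_dev_of_mem_solSet hX hf hV hr hp hx)).2
  · rw [← dev_eq_of_mem_solSet (intrinsicInterior_subset hq₀) hp, ← hxq₀]
    simp only [Pi.add_apply, Pi.smul_apply, Pi.sub_apply, smul_eq_mul]
    ring

lemma Nset_subset_of_mem_intrinsicInterior : Nset X f q₀ ⊆ Nset X f p := by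
  obtain ⟨t, ht, hr⟩ := exists_pos_add_smul_sub_mem_of_mem_intrinsicInterior hq₀ hp
  rintro x ⟨hx, hxq₀⟩
  refine ⟨hx, eq_of_mul_add_eq_one_add_mul ht ?_ ?_ (b := (q₀ + t • (q₀ - p)) x - f x) ?_⟩
  · linarith [(abs_le.mp (abs_sub_le_dev_of_mem_solSet hX hf hV hp hp hx)).1]
  · linarith [(abs_le.mp (abs_sub_le_dev_of_mem_solSet hX hf hV hr hp hx)).1]
  · rw [← dev_eq_of_mem_solSet (intrinsicInterior_subset hq₀) hp, ← hxq₀]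
    simp only [Pi.add_apply, Pi.smul_apply, Pi.sub_apply, smul_eq_mul]
    ring

lemma sepSet_subset_of_mem_intrinsicInterior : sepSet V X f p ⊆ sepSet V X f q₀ :=
  fun _ ⟨hsV, hs⟩ => ⟨hsV, fun x hx y hy =>
    hs x (Pset_subset_of_mem_intrinsicInterior hX hf hV hq₀ hp hx)
      y (Nset_subset_of_mem_intrinsicInterior hX hf hV hq₀ hp hy)⟩

end Chebyshev

theorem stmt5_general (n : ℕ) (X : Set (Fin n → ℝ)) (hXc : IsCompact X)
    (f : (Fin n → ℝ) → ℝ) (hf : ContinuousOn f X)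
    (V : Submodule ℝ ((Fin n → ℝ) → ℝ)) (hVpoly : ∀ g ∈ V, IsPolyFun n g)
    (q₀ : (Fin n → ℝ) → ℝ) (hq₀ : q₀ ∈ intrinsicInterior ℝ (solSet V X f)) :
    ∀ q ∈ solSet V X f, ∀ p ∈ solSet V X f,
      (p - q) ∈ sepSet V X f p ∧ sepSet V X f p ⊆ sepSet V X f q₀ :=
  fun _ hq _ hp => ⟨sub_mem_sepSet hXc hf hVpoly hq hp,
    sepSet_subset_of_mem_intrinsicInterior hXc hf hVpoly hq₀ hp⟩

/-- For any two optimal solutions `q, p ∈ Q`, the difference `p − q` belongs to `S(p)`, and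
`S(p) ⊆ S`, where `S = S(q₀)` for any `q₀` in the relative interior of `Q`. -/
theorem stmt5 (n : ℕ) (X : Set (Fin n → ℝ)) (hX : X.Nonempty) (hXc : IsCompact X)
    (f : (Fin n → ℝ) → ℝ) (hf : ContinuousOn f X)
    (V : Submodule ℝ ((Fin n → ℝ) → ℝ)) (hVpoly : ∀ g ∈ V, IsPolyFun n g)
    (hVfd : FiniteDimensional ℝ ↥V)
    (q₀ : (Fin n → ℝ) → ℝ) (hq₀ : q₀ ∈ intrinsicInterior ℝ (solSet V X f)) :
    ∀ q ∈ solSet V X f, ∀ p ∈ solSet V X f,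
      (p - q) ∈ sepSet V X f p ∧ sepSet V X f p ⊆ sepSet V X f q₀ :=
  stmt5_general n X hXc f hf V hVpoly q₀ hq₀
end
end

section
/- The dimension of the solution set Q (i.e., the dimension of its affine hull) is at most the dimension of the linear span of the maximal set S of separating polynomials: dim Q ≤ dim S. -/
open Set

noncomputable section

lemma abs_le_dev {n : ℕ} {X : Set (Fin n → ℝ)} (hXc : IsCompact X)
    {f q : (Fin n → ℝ) → ℝ} (hf : ContinuousOn f X) (hq : Continuous q)
    {x : Fin n → ℝ} (hx : x ∈ X) : |f x - q x| ≤ dev X f q := by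
  have hc : ContinuousOn (fun x => |f x - q x|) X :=
    (hf.sub hq.continuousOn).abs
  have hbdd : BddAbove ((fun x => |f x - q x|) '' X) :=
    (hXc.image_of_continuousOn hc).bddAbove
  exact le_csSup hbdd (mem_image_of_mem _ hx)

/-- The dimension of the solution set `Q` (the dimension of the direction space of its affine
hull) is at most the dimension of the linear span of the maximal set `S = S(q₀)` of separating
polynomials, `q₀` being any point of the relative interior of `Q`. -/
theorem stmt6 (n : ℕ) (X : Set (Fin n → ℝ)) (hX : X.Nonempty) (hXc : IsCompact X)
    (f : (Fin n → ℝ) → ℝ) (hf : ContinuousOn f X)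
    (V : Submodule ℝ ((Fin n → ℝ) → ℝ)) (hVpoly : ∀ g ∈ V, IsPolyFun n g)
    (hVfd : FiniteDimensional ℝ ↥V)
    (q₀ : (Fin n → ℝ) → ℝ) (hq₀ : q₀ ∈ intrinsicInterior ℝ (solSet V X f)) :
    Module.finrank ℝ (affineSpan ℝ (solSet V X f)).direction ≤
      Module.finrank ℝ (Submodule.span ℝ (sepSet V X f q₀)) := by
  have hcontV : ∀ g ∈ V, Continuous g := by
    intro g hg
    obtain ⟨P, hP⟩ := hVpoly g hg
    have : Continuous fun x => MvPolynomial.eval x P := MvPolynomial.continuous_eval P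
    simpa [funext hP] using this
  have hq₀Q : q₀ ∈ solSet V X f := intrinsicInterior_subset hq₀
  -- the key inclusion: `Q - q₀ ⊆ S(q₀)`
  have hsub : (fun q => q - q₀) '' solSet V X f ⊆ sepSet V X f q₀ := by
    rintro _ ⟨q, hq, rfl⟩
    have hdev : dev X f q = dev X f q₀ :=
      le_antisymm (hq.2 q₀ hq₀Q.1) (hq₀Q.2 q hq.1)
    refine ⟨Submodule.sub_mem V hq.1 hq₀Q.1, ?_⟩
    rintro x ⟨hxX, hxP⟩ y ⟨hyX, hyN⟩
    have hx' : |f x - q x| ≤ dev X f q := abs_le_dev hXc hf (hcontV q hq.1) hxX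
    have hy' : |f y - q y| ≤ dev X f q := abs_le_dev hXc hf (hcontV q hq.1) hyX
    have h1 : 0 ≤ q x - q₀ x := by
      have := abs_le.mp hx'
      show (0:ℝ) ≤ q x - q₀ x
      linarith [this.2, hxP, hdev.le, hdev.ge]
    have h2 : q y - q₀ y ≤ 0 := by
      have := abs_le.mp hy'
      show q y - q₀ y ≤ (0:ℝ)
      linarith [this.1, hyN, hdev.le, hdev.ge]
    exact mul_nonpos_of_nonneg_of_nonpos h1 h2
  -- finite dimensionality of the span of `S(q₀)`
  have hSV : Submodule.span ℝ (sepSet V X f q₀) ≤ V := by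
    rw [Submodule.span_le]; exact fun s hs => hs.1
  haveI : FiniteDimensional ℝ (Submodule.span ℝ (sepSet V X f q₀)) :=
    Submodule.finiteDimensional_of_le hSV
  rw [direction_affineSpan,
    vectorSpan_eq_span_vsub_set_right ℝ hq₀Q]
  apply Submodule.finrank_mono
  apply Submodule.span_mono
  intro v hv
  apply hsub
  simpa using hv
end
end

section
/- If the maximal set of separating polynomials is trivial, S = {0}, then the best Chebyshev approximation is unique, i.e., Q is a singleton. -/
open Set

noncomputable section

/-- If the maximal set of separating polynomials is trivial, `S = {0}`, then the best
Chebyshev approximation is unique, i.e., `Q` is a singleton. -/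
theorem stmt8 (n : ℕ) (X : Set (Fin n → ℝ)) (hX : X.Nonempty) (hXc : IsCompact X)
    (f : (Fin n → ℝ) → ℝ) (hf : ContinuousOn f X)
    (V : Submodule ℝ ((Fin n → ℝ) → ℝ)) (hVpoly : ∀ g ∈ V, IsPolyFun n g)
    (hVfd : FiniteDimensional ℝ ↥V)
    (q₀ : (Fin n → ℝ) → ℝ) (hq₀ : q₀ ∈ intrinsicInterior ℝ (solSet V X f))
    (hS : sepSet V X f q₀ = {0}) :
    ∃ q, solSet V X f = {q} := by
  have hq₀sol : q₀ ∈ solSet V X f := intrinsicInterior_subset hq₀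
  obtain ⟨hq₀V, hq₀best⟩ := hq₀sol
  refine ⟨q₀, Set.eq_singleton_iff_unique_mem.2 ⟨⟨hq₀V, hq₀best⟩, ?_⟩⟩
  rintro q ⟨hqV, hqbest⟩
  -- deviations are equal
  have hd : dev X f q = dev X f q₀ := le_antisymm (hqbest q₀ hq₀V) (hq₀best q hqV)
  -- q is continuous
  have hcont : ∀ g ∈ V, Continuous g := by
    intro g hg
    obtain ⟨P, hP⟩ := hVpoly g hg
    have : g = fun x => MvPolynomial.eval x P := funext hP
    rw [this]
    exact MvPolynomial.continuous_eval P
  have hbdd : BddAbove ((fun x => |f x - q x|) '' X) := by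
    have : ContinuousOn (fun x => |f x - q x|) X :=
      (hf.sub (hcont q hqV).continuousOn).abs
    exact (hXc.image_of_continuousOn this).bddAbove
  have hle : ∀ x ∈ X, |f x - q x| ≤ dev X f q := fun x hx =>
    le_csSup hbdd ⟨x, hx, rfl⟩
  -- show q - q₀ is separating
  have hsep : (q - q₀) ∈ sepSet V X f q₀ := by
    refine ⟨sub_mem hqV hq₀V, ?_⟩
    rintro x ⟨hxX, hxP⟩ y ⟨hyX, hyN⟩
    have h1 : f x - q x ≤ f x - q₀ x := by
      rw [hxP, ← hd]
      exact (le_abs_self _).trans (hle x hxX)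
    have h2 : q y ≤ q₀ y := by
      have : q y - f y ≤ q₀ y - f y := by
        rw [hyN, ← hd]
        calc q y - f y ≤ |f y - q y| := by rw [abs_sub_comm]; exact le_abs_self _
          _ ≤ dev X f q := hle y hyX
      linarith
    have hx0 : 0 ≤ (q - q₀) x := by simp only [Pi.sub_apply]; linarith
    have hy0 : (q - q₀) y ≤ 0 := by simp only [Pi.sub_apply]; linarith
    exact mul_nonpos_of_nonneg_of_nonpos hx0 hy0
  have : q - q₀ = 0 := by
    have := hS ▸ hsep
    simpa using this
  have hq : q = q₀ := by
    funext x
    have := congrFun this x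
    simp only [Pi.sub_apply, Pi.zero_apply] at this
    linarith
  exact hq
end
end

section
/- Let N and P be disjoint nonempty compact subsets of ℝⁿ, d = min{‖u−v‖ : u ∈ P, v ∈ N}, and f(x) = max_{u∈P} max{1 − (2/d)‖x−u‖, 0} − max_{v∈N} max{1 − (2/d)‖x−v‖, 0}. Let X ⊆ ℝⁿ be compact with N ∪ P ⊆ X, and let p be a polynomial function with p(x) ≥ 0 for x ∈ P and p(x) ≤ 0 for x ∈ N. If L is a Lipschitz constant for p on X and M ≥ max_{x∈X}|p(x)| with M > 0, then for α = min{1/M, 2/(dL)} the function q = α·p satisfies |f(x) − q(x)| ≤ 1 for all x ∈ X; consequently q is a best Chebyshev approximation of f on X (the optimal deviation being 1). -/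
open Set

/-- Let `N`, `P` be disjoint nonempty compact subsets of `ℝⁿ`, `d` the minimal distance
between `P` and `N`, and `f` the bump function built from `N` and `P`. Let `X ⊇ N ∪ P` be
compact, and let `p` be a polynomial function with `p ≥ 0` on `P` and `p ≤ 0` on `N`. If `L`
is a Lipschitz constant for `p` on `X` and `M ≥ max_{x ∈ X} |p x|`, `M > 0`, then for
`α = min {1/M, 2/(dL)}` the function `q = α • p` satisfies `|f x − q x| ≤ 1` on `X`;
consequently `q` is a best Chebyshev approximation of `f` on `X` from any set of functions
containing `q` over which the optimal deviation is `1`, the deviation of `q` being `1`. -/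
theorem stmt12 (n : ℕ) (N P : Set (EuclideanSpace ℝ (Fin n)))
    (hNP : Disjoint N P) (hN : N.Nonempty) (hP : P.Nonempty)
    (hNc : IsCompact N) (hPc : IsCompact P)
    (d : ℝ) (hd : IsLeast {r : ℝ | ∃ u ∈ P, ∃ v ∈ N, r = ‖u - v‖} d)
    (X : Set (EuclideanSpace ℝ (Fin n))) (hXc : IsCompact X) (hsub : N ∪ P ⊆ X)
    (p : EuclideanSpace ℝ (Fin n) → ℝ)
    (hpoly : ∃ Pol : MvPolynomial (Fin n) ℝ, ∀ x, p x = MvPolynomial.eval (fun i => x i) Pol)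
    (hpP : ∀ x ∈ P, 0 ≤ p x) (hpN : ∀ x ∈ N, p x ≤ 0)
    (L M : ℝ) (hL : ∀ x ∈ X, ∀ y ∈ X, |p x - p y| ≤ L * ‖x - y‖)
    (hM : ∀ x ∈ X, |p x| ≤ M) (hM0 : 0 < M) :
    let f : EuclideanSpace ℝ (Fin n) → ℝ := fun x =>
      sSup ((fun u => max (1 - (2 / d) * ‖x - u‖) 0) '' P) -
        sSup ((fun v => max (1 - (2 / d) * ‖x - v‖) 0) '' N)
    let α : ℝ := min (1 / M) (2 / (d * L))
    let q : EuclideanSpace ℝ (Fin n) → ℝ := fun x => α * p x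
    (∀ x ∈ X, |f x - q x| ≤ 1) ∧
      ∀ W : Set (EuclideanSpace ℝ (Fin n) → ℝ), q ∈ W →
        (∀ r ∈ W, (1 : ℝ) ≤ sSup ((fun x => |f x - r x|) '' X)) →
        (∀ r ∈ W, sSup ((fun x => |f x - q x|) '' X) ≤ sSup ((fun x => |f x - r x|) '' X)) ∧
          sSup ((fun x => |f x - q x|) '' X) = 1 := by
  intro f α q
  obtain ⟨u0, hu0, v0, hv0, hd0⟩ := hd.1
  have hu0X : u0 ∈ X := hsub (Or.inr hu0)
  have hv0X : v0 ∈ X := hsub (Or.inl hv0)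
  have huv : u0 ≠ v0 := fun h => (hNP.ne_of_mem hv0 hu0) h.symm
  have hdpos : 0 < d := by
    rw [hd0]
    exact norm_sub_pos_iff.mpr huv
  have hLnn : 0 ≤ L := by
    by_contra h
    push_neg at h
    have h1 := hL u0 hu0X v0 hv0X
    have h2 : ‖u0 - v0‖ > 0 := hd0 ▸ hdpos
    nlinarith [abs_nonneg (p u0 - p v0)]
  have hα0 : 0 ≤ α := le_min (by positivity) (by positivity)
  have hαM : α ≤ 1 / M := min_le_left _ _
  have hαL : α * L ≤ 2 / d := by
    rcases eq_or_lt_of_le hLnn with h | h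
    · rw [← h, mul_zero]
      positivity
    · have hle : α ≤ 2 / (d * L) := min_le_right _ _
      calc α * L ≤ (2 / (d * L)) * L := mul_le_mul_of_nonneg_right hle h.le
        _ = 2 / d := by field_simp
  have hq1 : ∀ x ∈ X, |q x| ≤ 1 := by
    intro x hx
    have hm := hM x hx
    calc |q x| = α * |p x| := by rw [abs_mul, abs_of_nonneg hα0]
      _ ≤ (1 / M) * M := mul_le_mul hαM hm (abs_nonneg _) (by positivity)
      _ = 1 := by field_simp
  -- boundedness of the bump images
  have hbdd : ∀ (x : EuclideanSpace ℝ (Fin n)) (S : Set (EuclideanSpace ℝ (Fin n))),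
      BddAbove ((fun u => max (1 - (2 / d) * ‖x - u‖) 0) '' S) := by
    intro x S
    refine ⟨1, ?_⟩
    rintro y ⟨u, hu, rfl⟩
    have : 0 ≤ (2 / d) * ‖x - u‖ := by positivity
    simp only [max_le_iff]
    constructor <;> linarith
  have hnonneg : ∀ (x : EuclideanSpace ℝ (Fin n)) (S : Set (EuclideanSpace ℝ (Fin n))),
      S.Nonempty → 0 ≤ sSup ((fun u => max (1 - (2 / d) * ‖x - u‖) 0) '' S) := by
    intro x S ⟨w, hw⟩
    have := le_csSup (hbdd x S) (Set.mem_image_of_mem _ hw)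
    exact le_trans (le_max_right _ 0) this
  have key : ∀ x ∈ X, |f x - q x| ≤ 1 := by
    intro x hx
    have hq1x := hq1 x hx
    have hgP : sSup ((fun u => max (1 - (2 / d) * ‖x - u‖) 0) '' P) ≤ 1 + q x := by
      apply csSup_le (hP.image _)
      rintro y ⟨u, hu, rfl⟩
      have habs := abs_le.mp (hL x hx u (hsub (Or.inr hu)))
      have hpu := hpP u hu
      have h1 : α * p x ≥ -(α * L * ‖x - u‖) := by nlinarith [norm_nonneg (x - u)]
      have h2 : α * L * ‖x - u‖ ≤ (2 / d) * ‖x - u‖ :=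
        mul_le_mul_of_nonneg_right hαL (norm_nonneg _)
      have habs2 := abs_le.mp hq1x
      simp only [max_le_iff, q] at *
      constructor <;> linarith
    have hgN : sSup ((fun v => max (1 - (2 / d) * ‖x - v‖) 0) '' N) ≤ 1 - q x := by
      apply csSup_le (hN.image _)
      rintro y ⟨v, hv, rfl⟩
      have habs := abs_le.mp (hL x hx v (hsub (Or.inl hv)))
      have hpv := hpN v hv
      have h1 : α * p x ≤ α * L * ‖x - v‖ := by nlinarith [norm_nonneg (x - v)]
      have h2 : α * L * ‖x - v‖ ≤ (2 / d) * ‖x - v‖ :=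
        mul_le_mul_of_nonneg_right hαL (norm_nonneg _)
      have habs2 := abs_le.mp hq1x
      simp only [max_le_iff, q] at *
      constructor <;> linarith
    have hP0 := hnonneg x P hP
    have hN0 := hnonneg x N hN
    rw [abs_le]
    constructor
    · simp only [f]; linarith
    · simp only [f]; linarith
  refine ⟨key, ?_⟩
  intro W hqW hW
  have hXne : X.Nonempty := ⟨u0, hu0X⟩
  have h1 : sSup ((fun x => |f x - q x|) '' X) ≤ 1 := by
    apply csSup_le (hXne.image _)
    rintro y ⟨x, hx, rfl⟩
    exact key x hx
  have heq : sSup ((fun x => |f x - q x|) '' X) = 1 := le_antisymm h1 (hW q hqW)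
  exact ⟨fun r hr => heq ▸ hW r hr, heq⟩
end

section
/- Let f(x,y) = x⁶ + y⁶ + 3x⁴y² + 3x²y⁴ + 6xy² − 2x³ and let X be the closed unit disk {(x,y) : x² + y² ≤ 1}. Then the two distinct polynomials q₀(x,y) = 1 and q₁(x,y) = 3x² + 3y² − 2 are both best Chebyshev approximations of f on X from the space of polynomials of degree at most 2 in two variables, and the optimal deviation is max_{(x,y)∈X}|f(x,y) − q₀(x,y)| = max_{(x,y)∈X}|f(x,y) − q₁(x,y)| = 2. In particular, the best quadratic approximation of f on the unit disk is not unique. -/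
open Set

def Fn : ℝ × ℝ → ℝ := fun p =>
  p.1 ^ 6 + p.2 ^ 6 + 3 * p.1 ^ 4 * p.2 ^ 2 + 3 * p.1 ^ 2 * p.2 ^ 4 +
    6 * p.1 * p.2 ^ 2 - 2 * p.1 ^ 3

def Dk : Set (ℝ × ℝ) := {p | p.1 ^ 2 + p.2 ^ 2 ≤ 1}

lemma Dk_compact : IsCompact Dk := by
  have hclosed : IsClosed Dk := by
    have : Dk = (fun p : ℝ × ℝ => p.1 ^ 2 + p.2 ^ 2) ⁻¹' Set.Iic 1 := rfl
    rw [this]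
    exact isClosed_Iic.preimage (by fun_prop)
  refine (isCompact_closedBall (0 : ℝ × ℝ) 1).of_isClosed_subset hclosed ?_
  rintro ⟨x, y⟩ hp
  simp only [Dk, Set.mem_setOf_eq] at hp
  simp only [Metric.mem_closedBall, dist_zero_right, Prod.norm_def, Real.norm_eq_abs,
    max_le_iff]
  constructor <;> rw [abs_le] <;> constructor <;> nlinarith [sq_nonneg x, sq_nonneg y]

lemma Fn_cont : Continuous Fn := by unfold Fn; fun_prop

lemma bdd_img (q : ℝ × ℝ → ℝ) (hq : Continuous q) :
    BddAbove ((fun p => |Fn p - q p|) '' Dk) :=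
  (Dk_compact.image_of_continuousOn ((continuous_abs.comp (Fn_cont.sub hq)).continuousOn)).bddAbove

lemma keyA (s c : ℝ) (h0 : 0 ≤ s) (h1 : s ≤ 1) (hc : c^2 ≤ s^3) : s^3 + 2*c ≤ 3 := by
  nlinarith [sq_nonneg (c-1), pow_le_one₀ h0 h1 (n := 3)]

lemma keyB (s c : ℝ) (hc : c^2 ≤ s^3) : -1 ≤ s^3 + 2*c := by
  nlinarith [sq_nonneg (c+1)]

lemma keyD (s c : ℝ) (h1 : s ≤ 1) (hc : c^2 ≤ s^3) : 0 ≤ s^3 + 2*c - 3*s + 4 := by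
  nlinarith [sq_nonneg (c+1)]

lemma keyC (s c : ℝ) (h0 : 0 ≤ s) (h1 : s ≤ 1) (hc : c^2 ≤ s^3) : s^3 + 2*c - 3*s ≤ 0 := by
  have hM : 0 ≤ 3*s - s^3 := by nlinarith [mul_nonneg h0 h0]
  have hsq : 4*c^2 ≤ (3*s - s^3)^2 := by
    nlinarith [mul_nonneg (mul_nonneg (mul_nonneg h0 h0) (sub_nonneg.2 h1)) h0,
      mul_nonneg (mul_nonneg h0 h0) (sub_nonneg.2 h1), sq_nonneg s, mul_nonneg h0 h0]
  nlinarith [hM, hsq]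

lemma cube_bound (x y : ℝ) : (3*x*y^2 - x^3)^2 ≤ (x^2 + y^2)^3 := by
  nlinarith [mul_nonneg (sq_nonneg y) (sq_nonneg (3*x^2 - y^2))]

lemma dev0_eq : sSup ((fun p => |Fn p - (fun _ : ℝ × ℝ => (1:ℝ)) p|) '' Dk) = 2 := by
  apply le_antisymm
  · apply Real.sSup_le _ (by norm_num)
    rintro z ⟨⟨x, y⟩, hp, rfl⟩
    simp only [Dk, Set.mem_setOf_eq] at hp
    have h0 : (0:ℝ) ≤ x^2 + y^2 := by positivity
    have hc := cube_bound x y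
    show |Fn (x, y) - 1| ≤ 2
    rw [abs_le]
    have hA := keyA (x^2+y^2) (3*x*y^2 - x^3) h0 hp hc
    have hB := keyB (x^2+y^2) (3*x*y^2 - x^3) hc
    constructor <;> · show _ ; simp only [Fn] ; nlinarith [hA, hB]
  · apply le_csSup (bdd_img _ continuous_const)
    refine ⟨(1, 0), by simp [Dk], ?_⟩
    show |Fn (1, 0) - 1| = 2
    norm_num [Fn]

lemma dev1_eq :
    sSup ((fun p => |Fn p - (fun p : ℝ × ℝ => 3 * p.1 ^ 2 + 3 * p.2 ^ 2 - 2) p|) '' Dk) = 2 := by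
  apply le_antisymm
  · apply Real.sSup_le _ (by norm_num)
    rintro z ⟨⟨x, y⟩, hp, rfl⟩
    simp only [Dk, Set.mem_setOf_eq] at hp
    have h0 : (0:ℝ) ≤ x^2 + y^2 := by positivity
    have hc := cube_bound x y
    show |Fn (x, y) - (3 * x ^ 2 + 3 * y ^ 2 - 2)| ≤ 2
    rw [abs_le]
    have hC := keyC (x^2+y^2) (3*x*y^2 - x^3) h0 hp hc
    have hD := keyD (x^2+y^2) (3*x*y^2 - x^3) hp hc
    constructor <;> · show _ ; simp only [Fn] ; nlinarith [hC, hD]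
  · apply le_csSup (bdd_img _ (by fun_prop))
    refine ⟨(0, 0), by simp [Dk], ?_⟩
    show |Fn (0, 0) - (3 * 0 ^ 2 + 3 * 0 ^ 2 - 2)| = 2
    norm_num [Fn]

lemma dev_ge (r : ℝ × ℝ → ℝ)
    (hr : ∃ a b c d e g : ℝ, ∀ p : ℝ × ℝ,
      r p = a + b * p.1 + c * p.2 + d * p.1 ^ 2 + e * p.1 * p.2 + g * p.2 ^ 2) :
    2 ≤ sSup ((fun p => |Fn p - r p|) '' Dk) := by
  obtain ⟨a, b, c, d, e, g, hr⟩ := hr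
  have hfun : (fun p => |Fn p - r p|) =
      (fun p : ℝ × ℝ => |Fn p - (a + b * p.1 + c * p.2 + d * p.1 ^ 2 + e * p.1 * p.2 + g * p.2 ^ 2)|) :=
    funext fun p => by rw [hr p]
  rw [hfun]
  have hb : BddAbove ((fun p : ℝ × ℝ =>
      |Fn p - (a + b * p.1 + c * p.2 + d * p.1 ^ 2 + e * p.1 * p.2 + g * p.2 ^ 2)|) '' Dk) :=
    bdd_img _ (by fun_prop)
  set S := sSup ((fun p : ℝ × ℝ =>
      |Fn p - (a + b * p.1 + c * p.2 + d * p.1 ^ 2 + e * p.1 * p.2 + g * p.2 ^ 2)|) '' Dk) with hS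
  set w : ℝ := Real.sqrt 3 / 2 with hwdef
  have hw : w ^ 2 = 3 / 4 := by
    rw [hwdef, div_pow, Real.sq_sqrt (by norm_num : (0:ℝ) ≤ 3)]; norm_num
  have hmemw : ∀ x : ℝ, x = 1/2 ∨ x = -(1/2) → (x, w) ∈ Dk := by
    rintro x (rfl | rfl) <;> · show _ ^ 2 + w ^ 2 ≤ 1; rw [hw]; norm_num
  have hmemw' : ∀ x : ℝ, x = 1/2 ∨ x = -(1/2) → (x, -w) ∈ Dk := by
    rintro x (rfl | rfl) <;>
      (show _ ^ 2 + (-w) ^ 2 ≤ 1; rw [show (-w)^2 = w^2 by ring, hw]; norm_num)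
  have hfval : ∀ x y : ℝ, y ^ 2 = 3/4 → x = 1/2 ∨ x = -(1/2) →
      Fn (x, y) = 1 - 2 * (x^3 - 3*x*y^2) := by
    rintro x y hy (rfl | rfl) <;>
    · show _ = _
      simp only [Fn]
      rw [show y^6 = (y^2)^3 by ring, show y^4 = (y^2)^2 by ring, hy]
      ring
  have h1 : |Fn ((1:ℝ), (0:ℝ)) - (a + b * 1 + c * 0 + d * 1 ^ 2 + e * 1 * 0 + g * 0 ^ 2)| ≤ S :=
    le_csSup hb ⟨(1, 0), by simp [Dk], rfl⟩
  have h4 : |Fn ((-1:ℝ), (0:ℝ)) - (a + b * (-1) + c * 0 + d * (-1) ^ 2 + e * (-1) * 0 + g * 0 ^ 2)| ≤ S :=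
    le_csSup hb ⟨(-1, 0), by simp [Dk], rfl⟩
  have h2 : |Fn ((1/2 : ℝ), w) - (a + b * (1/2) + c * w + d * (1/2) ^ 2 + e * (1/2) * w + g * w ^ 2)| ≤ S :=
    le_csSup hb ⟨(1/2, w), hmemw _ (Or.inl rfl), rfl⟩
  have h3 : |Fn ((-(1/2) : ℝ), w) - (a + b * (-(1/2)) + c * w + d * (-(1/2)) ^ 2 + e * (-(1/2)) * w + g * w ^ 2)| ≤ S :=
    le_csSup hb ⟨(-(1/2), w), hmemw _ (Or.inr rfl), rfl⟩
  have h5 : |Fn ((-(1/2) : ℝ), -w) - (a + b * (-(1/2)) + c * (-w) + d * (-(1/2)) ^ 2 + e * (-(1/2)) * (-w) + g * (-w) ^ 2)| ≤ S :=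
    le_csSup hb ⟨(-(1/2), -w), hmemw' _ (Or.inr rfl), rfl⟩
  have h6 : |Fn ((1/2 : ℝ), -w) - (a + b * (1/2) + c * (-w) + d * (1/2) ^ 2 + e * (1/2) * (-w) + g * (-w) ^ 2)| ≤ S :=
    le_csSup hb ⟨(1/2, -w), hmemw' _ (Or.inl rfl), rfl⟩
  have hnw : (-w) ^ 2 = 3/4 := by rw [show (-w)^2 = w^2 by ring, hw]
  rw [show Fn ((1:ℝ), (0:ℝ)) = -1 by norm_num [Fn]] at h1
  rw [show Fn ((-1:ℝ), (0:ℝ)) = 3 by norm_num [Fn]] at h4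
  rw [hfval _ _ hw (Or.inl rfl)] at h2
  rw [hfval _ _ hw (Or.inr rfl)] at h3
  rw [hfval _ _ hnw (Or.inr rfl)] at h5
  rw [hfval _ _ hnw (Or.inl rfl)] at h6
  rw [abs_le] at h1 h2 h3 h4 h5 h6
  rw [hw] at h2 h3
  rw [hnw] at h5 h6
  obtain ⟨h1l, h1r⟩ := h1
  obtain ⟨h2l, h2r⟩ := h2
  obtain ⟨h3l, h3r⟩ := h3
  obtain ⟨h4l, h4r⟩ := h4
  obtain ⟨h5l, h5r⟩ := h5
  obtain ⟨h6l, h6r⟩ := h6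
  nlinarith [h1l, h1r, h2l, h2r, h3l, h3r, h4l, h4r, h5l, h5r, h6l, h6r, hw]

lemma ne01 : (fun _ : ℝ × ℝ => (1:ℝ)) ≠ (fun p : ℝ × ℝ => 3 * p.1 ^ 2 + 3 * p.2 ^ 2 - 2) :=
  fun h => by have := congrFun h (0, 0); norm_num at this

/-- The function `f(x,y) = x⁶ + y⁶ + 3x⁴y² + 3x²y⁴ + 6xy² − 2x³` has (at least) two distinct
best Chebyshev approximations on the closed unit disk from the space of polynomials of degree
at most `2`, namely `q₀ = 1` and `q₁ = 3x² + 3y² − 2`, the optimal deviation being `2`. -/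
theorem stmt15 :
    let f : ℝ × ℝ → ℝ := fun p =>
      p.1 ^ 6 + p.2 ^ 6 + 3 * p.1 ^ 4 * p.2 ^ 2 + 3 * p.1 ^ 2 * p.2 ^ 4 +
        6 * p.1 * p.2 ^ 2 - 2 * p.1 ^ 3
    let X : Set (ℝ × ℝ) := {p | p.1 ^ 2 + p.2 ^ 2 ≤ 1}
    let IsQuad : ((ℝ × ℝ) → ℝ) → Prop := fun q => ∃ a b c d e g : ℝ, ∀ p : ℝ × ℝ,
      q p = a + b * p.1 + c * p.2 + d * p.1 ^ 2 + e * p.1 * p.2 + g * p.2 ^ 2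
    let dev : ((ℝ × ℝ) → ℝ) → ℝ := fun q => sSup ((fun p => |f p - q p|) '' X)
    let q₀ : (ℝ × ℝ) → ℝ := fun _ => 1
    let q₁ : (ℝ × ℝ) → ℝ := fun p => 3 * p.1 ^ 2 + 3 * p.2 ^ 2 - 2
    IsQuad q₀ ∧ IsQuad q₁ ∧ q₀ ≠ q₁ ∧
      (∀ r, IsQuad r → dev q₀ ≤ dev r) ∧ (∀ r, IsQuad r → dev q₁ ≤ dev r) ∧
      dev q₀ = 2 ∧ dev q₁ = 2 := by
  intro f X IsQuad dev q₀ q₁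
  refine ⟨⟨1, 0, 0, 0, 0, 0, fun p => by show (1:ℝ) = _; ring⟩,
    ⟨-2, 0, 0, 3, 0, 3, fun p => by show 3 * p.1 ^ 2 + 3 * p.2 ^ 2 - 2 = _; ring⟩,
    ne01,
    fun r hrq => le_trans (le_of_eq dev0_eq) (dev_ge r hrq),
    fun r hrq => le_trans (le_of_eq dev1_eq) (dev_ge r hrq),
    dev0_eq, dev1_eq⟩
end

section
/- Let f(x,y) = x⁶ + y⁶ + 3x⁴y² + 3x²y⁴ + 6xy² − 2x³ and, for α ∈ [0,1], let q_α(x,y) = 3α(x² + y² − 1) + 1. Then for every α ∈ [0,1] and every (x,y) with x² + y² ≤ 1 one has −2 ≤ f(x,y) − q_α(x,y) ≤ 2; moreover the value −2 is attained at (1,0), (−1/2, √3/2), (−1/2, −√3/2) and the value 2 is attained at (1/2, √3/2), (−1,0), (1/2, −√3/2), for every α ∈ [0,1]. -/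
open Set

private lemma stmt16_aux (α s c : ℝ) (hα0 : 0 ≤ α) (hα1 : α ≤ 1) (hs : 0 ≤ s)
    (hs1 : s ≤ 1) (hc : c ^ 2 ≤ s ^ 3) :
    -2 ≤ s ^ 3 - 2 * c - (3 * α * (s - 1) + 1) ∧
      s ^ 3 - 2 * c - (3 * α * (s - 1) + 1) ≤ 2 := by
  constructor
  · nlinarith [sq_nonneg (c - 1), mul_nonneg hα0 (by linarith : (0:ℝ) ≤ 1 - s)]
  · have hA : 0 ≤ 3 * s - s ^ 3 := by nlinarith [mul_nonneg hs (by nlinarith : (0:ℝ) ≤ 3 - s ^ 2)]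
    have hsq : 4 * c ^ 2 ≤ (3 * s - s ^ 3) ^ 2 := by
      nlinarith [mul_nonneg (mul_nonneg (mul_nonneg hs hs)
        (by linarith : (0:ℝ) ≤ 1 - s)) (by nlinarith : (0:ℝ) ≤ 9 + 5 * s - s ^ 2 - s ^ 3)]
    have h2c : -(3 * s - s ^ 3) ≤ 2 * c := by nlinarith [hA, hsq]
    nlinarith [h2c, mul_nonneg (by linarith : (0:ℝ) ≤ 1 - α)
      (by linarith : (0:ℝ) ≤ 1 - s)]

/-- For `f(x,y) = x⁶ + y⁶ + 3x⁴y² + 3x²y⁴ + 6xy² − 2x³` and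
`q_α(x,y) = 3α(x² + y² − 1) + 1`, `α ∈ [0,1]`: on the unit disk `−2 ≤ f − q_α ≤ 2`, the value
`−2` is attained at `(1,0)`, `(−1/2, √3/2)`, `(−1/2, −√3/2)` and the value `2` at
`(1/2, √3/2)`, `(−1,0)`, `(1/2, −√3/2)`, for every `α ∈ [0,1]`. -/
theorem stmt16 :
    let f : ℝ → ℝ → ℝ := fun x y =>
      x ^ 6 + y ^ 6 + 3 * x ^ 4 * y ^ 2 + 3 * x ^ 2 * y ^ 4 + 6 * x * y ^ 2 - 2 * x ^ 3
    let q : ℝ → ℝ → ℝ → ℝ := fun α x y => 3 * α * (x ^ 2 + y ^ 2 - 1) + 1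
    ∀ α ∈ Set.Icc (0 : ℝ) 1,
      (∀ x y : ℝ, x ^ 2 + y ^ 2 ≤ 1 →
        -2 ≤ f x y - q α x y ∧ f x y - q α x y ≤ 2) ∧
      f 1 0 - q α 1 0 = -2 ∧
      f (-(1/2)) (Real.sqrt 3 / 2) - q α (-(1/2)) (Real.sqrt 3 / 2) = -2 ∧
      f (-(1/2)) (-(Real.sqrt 3 / 2)) - q α (-(1/2)) (-(Real.sqrt 3 / 2)) = -2 ∧
      f (1/2) (Real.sqrt 3 / 2) - q α (1/2) (Real.sqrt 3 / 2) = 2 ∧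
      f (-1) 0 - q α (-1) 0 = 2 ∧
      f (1/2) (-(Real.sqrt 3 / 2)) - q α (1/2) (-(Real.sqrt 3 / 2)) = 2 := by
  intro f q α hα
  obtain ⟨hα0, hα1⟩ := hα
  have h3 : Real.sqrt 3 ^ 2 = 3 := Real.sq_sqrt (by norm_num)
  refine ⟨?_, by norm_num [f, q],
    by simp only [f, q]; linear_combination ((Real.sqrt 3 ^ 2 - 3) ^ 2 / 64 +
      3 * (Real.sqrt 3 ^ 2 - 3) / 16 - 3 * α / 4) * h3,
    by simp only [f, q]; linear_combination ((Real.sqrt 3 ^ 2 - 3) ^ 2 / 64 +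
      3 * (Real.sqrt 3 ^ 2 - 3) / 16 - 3 * α / 4) * h3,
    by simp only [f, q]; linear_combination ((Real.sqrt 3 ^ 2 - 3) ^ 2 / 64 +
      3 * (Real.sqrt 3 ^ 2 - 3) / 16 + 3 / 2 - 3 * α / 4) * h3,
    by norm_num [f, q],
    by simp only [f, q]; linear_combination ((Real.sqrt 3 ^ 2 - 3) ^ 2 / 64 +
      3 * (Real.sqrt 3 ^ 2 - 3) / 16 + 3 / 2 - 3 * α / 4) * h3⟩
  intro x y hxy
  have key := stmt16_aux α (x ^ 2 + y ^ 2) (x ^ 3 - 3 * x * y ^ 2) hα0 hα1 (by positivity)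
    hxy (by nlinarith [sq_nonneg (3 * x ^ 2 * y - y ^ 3)])
  constructor
  · simp only [f, q]; linarith [key.1]
  · simp only [f, q]; linarith [key.2]
end

section
/- Let h(x,y) = (x² − 1/2)(1 − |y|) on the square X = [−1,1] × [−1,1]. Then for every α ∈ [−1/2, 1/2] the function q_α(x,y) = αy is a best Chebyshev approximation of h on X from the space of affine functions (polynomials of degree at most 1 in two variables), with optimal deviation max_{(x,y)∈X}|h(x,y) − q_α(x,y)| = 1/2. In particular, the best affine approximation of h on X is not unique. -/
open Set

/-- For `h(x,y) = (x² − 1/2)(1 − |y|)` on the square `X = [−1,1] × [−1,1]`, every function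
`q_α(x,y) = αy` with `α ∈ [−1/2, 1/2]` is a best Chebyshev approximation of `h` on `X` from
the space of affine functions, with optimal deviation `1/2`; in particular, the best affine
approximation of `h` on `X` is not unique. -/
theorem stmt18 :
    let h : ℝ × ℝ → ℝ := fun p => (p.1 ^ 2 - 1 / 2) * (1 - |p.2|)
    let X : Set (ℝ × ℝ) := {p | p.1 ∈ Set.Icc (-1 : ℝ) 1 ∧ p.2 ∈ Set.Icc (-1 : ℝ) 1}
    let IsAff : ((ℝ × ℝ) → ℝ) → Prop := fun q => ∃ a b c : ℝ, ∀ p : ℝ × ℝ,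
      q p = a + b * p.1 + c * p.2
    let dev : ((ℝ × ℝ) → ℝ) → ℝ := fun q => sSup ((fun p => |h p - q p|) '' X)
    (∀ α ∈ Set.Icc (-(1/2) : ℝ) (1/2),
      IsAff (fun p => α * p.2) ∧
      (∀ r, IsAff r → dev (fun p => α * p.2) ≤ dev r) ∧
      dev (fun p => α * p.2) = 1 / 2) ∧
    ¬ ∃! q : (ℝ × ℝ) → ℝ, IsAff q ∧ ∀ r, IsAff r → dev q ≤ dev r := by
  intro h X IsAff dev
  have hmem : ∀ x y : ℝ, |x| ≤ 1 → |y| ≤ 1 → ((x, y) : ℝ × ℝ) ∈ X := by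
    intro x y hx hy
    exact ⟨Set.mem_Icc.mpr (abs_le.mp hx), Set.mem_Icc.mpr (abs_le.mp hy)⟩
  -- lower bound: every affine function has deviation ≥ 1/2
  have key : ∀ r, IsAff r → 1/2 ≤ dev r := by
    rintro r ⟨a, b, c, hr⟩
    have hb : BddAbove ((fun p => |h p - r p|) '' X) := by
      refine ⟨1/2 + |a| + |b| + |c|, ?_⟩
      rintro v ⟨p, ⟨hx, hy⟩, rfl⟩
      rw [Set.mem_Icc] at hx hy
      have hx' : |p.1| ≤ 1 := abs_le.mpr hx
      have hy' : |p.2| ≤ 1 := abs_le.mpr hy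
      have h1 : |p.1 ^ 2 - 1/2| ≤ 1/2 := by
        rw [abs_le]; constructor <;> nlinarith [sq_nonneg p.1]
      have h2 : abs (1 - abs p.2) ≤ 1 := by
        rw [abs_le]; constructor <;> linarith [abs_nonneg p.2]
      have hh : |h p| ≤ 1/2 := by
        simp only [h, abs_mul]
        calc |p.1 ^ 2 - 1/2| * abs (1 - abs p.2) ≤ (1/2) * 1 :=
              mul_le_mul h1 h2 (abs_nonneg _) (by norm_num)
          _ = 1/2 := by norm_num
      have hrp : |r p| ≤ |a| + |b| + |c| := by
        rw [hr p]
        calc |a + b * p.1 + c * p.2| ≤ |a + b * p.1| + |c * p.2| := abs_add_le _ _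
          _ ≤ |a| + |b * p.1| + |c * p.2| := by linarith [abs_add_le a (b * p.1)]
          _ = |a| + |b| * |p.1| + |c| * |p.2| := by rw [abs_mul, abs_mul]
          _ ≤ |a| + |b| + |c| := by
              nlinarith [abs_nonneg b, abs_nonneg c, abs_nonneg p.1, abs_nonneg p.2]
      calc |h p - r p| ≤ |h p| + |r p| := abs_sub _ _
        _ ≤ 1/2 + |a| + |b| + |c| := by linarith
    have m1 : |h (0, 0) - r (0, 0)| ≤ dev r :=
      le_csSup hb ⟨(0, 0), hmem 0 0 (by norm_num) (by norm_num), rfl⟩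
    have m2 : |h (1, 0) - r (1, 0)| ≤ dev r :=
      le_csSup hb ⟨(1, 0), hmem 1 0 (by norm_num) (by norm_num), rfl⟩
    have m3 : |h (-1, 0) - r (-1, 0)| ≤ dev r :=
      le_csSup hb ⟨(-1, 0), hmem (-1) 0 (by norm_num) (by norm_num), rfl⟩
    have e1 : h (0, 0) - r (0, 0) = -1/2 - a := by
      simp only [h, hr]; norm_num
    have e2 : h (1, 0) - r (1, 0) = 1/2 - (a + b) := by
      simp only [h, hr]; norm_num
    have e3 : h (-1, 0) - r (-1, 0) = 1/2 - (a - b) := by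
      simp only [h, hr]; norm_num; ring
    rw [e1] at m1; rw [e2] at m2; rw [e3] at m3
    rw [abs_le] at m1 m2 m3
    linarith [m1.1, m1.2, m2.1, m2.2, m3.1, m3.2]
  -- main part
  have main : ∀ α ∈ Set.Icc (-(1/2) : ℝ) (1/2),
      IsAff (fun p => α * p.2) ∧
      (∀ r, IsAff r → dev (fun p => α * p.2) ≤ dev r) ∧
      dev (fun p => α * p.2) = 1/2 := by
    intro α hα
    rw [Set.mem_Icc] at hα
    have hα' : |α| ≤ 1/2 := abs_le.mpr ⟨by linarith [hα.1], hα.2⟩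
    have haff : IsAff (fun p => α * p.2) := ⟨0, 0, α, fun p => by ring⟩
    have bound : ∀ v ∈ (fun p => |h p - α * p.2|) '' X, v ≤ 1/2 := by
      rintro v ⟨p, ⟨hx, hy⟩, rfl⟩
      rw [Set.mem_Icc] at hx hy
      have hy' : |p.2| ≤ 1 := abs_le.mpr hy
      have h1 : |p.1 ^ 2 - 1/2| ≤ 1/2 := by
        rw [abs_le]; constructor <;> nlinarith [sq_nonneg p.1]
      have hb1 : |(p.1 ^ 2 - 1/2) * (1 - |p.2|)| ≤ (1/2) * (1 - |p.2|) := by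
        rw [abs_mul, abs_of_nonneg (by linarith : (0:ℝ) ≤ 1 - |p.2|)]
        exact mul_le_mul_of_nonneg_right h1 (by linarith)
      have hb2 : |α * p.2| ≤ (1/2) * |p.2| := by
        rw [abs_mul]; exact mul_le_mul_of_nonneg_right hα' (abs_nonneg _)
      rw [abs_le] at hb1 hb2 ⊢
      simp only [h]
      constructor <;> linarith [hb1.1, hb1.2, hb2.1, hb2.2]
    have hdev : dev (fun p => α * p.2) = 1/2 := by
      apply le_antisymm
      · exact csSup_le ⟨_, ⟨(1, 0), hmem 1 0 (by norm_num) (by norm_num), rfl⟩⟩ bound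
      · have : ((1:ℝ)/2) = |h (1, 0) - α * (1, (0:ℝ)).2| := by
          simp only [h]; norm_num [abs_of_nonneg]
        rw [this]
        exact le_csSup ⟨1/2, bound⟩ ⟨(1, 0), hmem 1 0 (by norm_num) (by norm_num), rfl⟩
    exact ⟨haff, fun r hrAff => hdev ▸ key r hrAff, hdev⟩
  refine ⟨main, ?_⟩
  rintro ⟨q, hq, huniq⟩
  have h0 := main 0 (by constructor <;> norm_num)
  have h1 := main (1/2) (by constructor <;> norm_num)
  have e0 : (fun p : ℝ × ℝ => (0:ℝ) * p.2) = q := huniq _ ⟨h0.1, h0.2.1⟩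
  have e1 : (fun p : ℝ × ℝ => (1/2 : ℝ) * p.2) = q := huniq _ ⟨h1.1, h1.2.1⟩
  have := congrFun (e0.trans e1.symm) (0, 1)
  norm_num at this
end
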